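/- Let A, B ∈ V be two nonzero tuples of matrices. Then the tuple AᵀB = (A_1ᵀB_1,…,A_LᵀB_L) is skew-symmetric (i.e., A_ℓᵀB_ℓ + B_ℓᵀA_ℓ = 0 for every ℓ = 1,…,L) if and only if there exists Q ∈ H = ∏_{ℓ=1}^L O(N_ℓ) such that A − B = Q·(A + B), i.e., A_ℓ − B_ℓ = Q_ℓ(A_ℓ + B_ℓ) for every ℓ. -/

import Mathlib

open scoped BigOperators
open Matrix

namespace GPR

variable {L : ℕ} {N R : Fin L → ℕ}

/-- The signal space: `L`-tuples of real `N ℓ × R ℓ` matrices. -/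
abbrev V (N R : Fin L → ℕ) := ∀ ℓ : Fin L, Matrix (Fin (N ℓ)) (Fin (R ℓ)) ℝ

/-- Frobenius norm of a tuple of matrices: `(Σ_ℓ Σ_{i,j} (X_ℓ)_{ij}²)^{1/2}`. -/
noncomputable def fnorm {m n : Fin L → ℕ} (X : ∀ ℓ : Fin L, Matrix (Fin (m ℓ)) (Fin (n ℓ)) ℝ) : ℝ :=
  Real.sqrt (∑ ℓ, ∑ i, ∑ j, (X ℓ i j) ^ 2)

/-- The group `H = ∏_ℓ O(N ℓ)`, as tuples of orthogonal matrices. -/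
abbrev HGroup (N : Fin L → ℕ) := ∀ ℓ : Fin L, Matrix.orthogonalGroup (Fin (N ℓ)) ℝ

/-- The action of `H` on `V`: `(Q · X)_ℓ = Q_ℓ X_ℓ`. -/
def act (Q : HGroup N) (X : V N R) : V N R :=
  fun ℓ => (Q ℓ : Matrix (Fin (N ℓ)) (Fin (N ℓ)) ℝ) * X ℓ

/-- `d_σ(X,Y) = min(‖X−Y‖, ‖X+Y‖)`. -/
noncomputable def dSigma (X Y : V N R) : ℝ := min (fnorm (X - Y)) (fnorm (X + Y))

/-- `d_H(X,Y) = min_{Q ∈ H} ‖X − Q·Y‖`. -/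
noncomputable def dH (X Y : V N R) : ℝ := ⨅ Q : HGroup N, fnorm (X - act Q Y)

/-- The positive semidefinite square root `√(XᵀX)` of the Gram matrix of a single matrix. -/
noncomputable def gramSqrt {n d : ℕ} (X : Matrix (Fin n) (Fin d) ℝ) : Matrix (Fin d) (Fin d) ℝ :=
  ((Matrix.posSemidef_conjTranspose_mul_self X).1.eigenvectorUnitary : Matrix (Fin d) (Fin d) ℝ) *
    diagonal ((RCLike.ofReal : ℝ → ℝ) ∘ (Real.sqrt ·) ∘ (Matrix.posSemidef_conjTranspose_mul_self X).1.eigenvalues) *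
    (star (Matrix.posSemidef_conjTranspose_mul_self X).1.eigenvectorUnitary : Matrix (Fin d) (Fin d) ℝ)

/-- The tuple `√(XᵀX) = (√(X₁ᵀX₁), …, √(X_LᵀX_L))`. -/
noncomputable def sqrtGram (X : V N R) : ∀ ℓ : Fin L, Matrix (Fin (R ℓ)) (Fin (R ℓ)) ℝ :=
  fun ℓ => gramSqrt (X ℓ)

/-- The second moment: tuple of Gram matrices `XᵀX = (X₁ᵀX₁, …, X_LᵀX_L)`. -/
def gram (X : V N R) : ∀ ℓ : Fin L, Matrix (Fin (R ℓ)) (Fin (R ℓ)) ℝ :=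
  fun ℓ => (X ℓ)ᵀ * X ℓ

/-- A set `S ⊆ V` is transverse to the orbits of `H` if whenever `X ∈ S` and `Q·X ∈ S`,
one has `Q·X = X` or `Q·X = −X`. -/
def Transverse (S : Set (V N R)) : Prop :=
  ∀ X ∈ S, ∀ Q : HGroup N, act Q X ∈ S → act Q X = X ∨ act Q X = -X

end GPR

/-!
Since `(A + B)ᴴ(A + B) - (A - B)ᴴ(A - B) = 2 (AᴴB + BᴴA)`, the tuple `AᵀB` is skew exactly when
`A - B` and `A + B` have the same Gram matrices. Two matrices `X`, `Y` with `XᴴX = YᴴY` satisfy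
`‖Xv‖ = ‖Yv‖` for every `v`, so `Yv ↦ Xv` is a well-defined linear isometry on the range of `Y`;
extending it to the whole space gives a unitary `U` with `X = UY`.
-/

theorem LinearMap.exists_linearIsometry_comp_eq_of_norm_eq {𝕜 M F : Type*} [RCLike 𝕜]
    [AddCommGroup M] [Module 𝕜 M] [NormedAddCommGroup F] [InnerProductSpace 𝕜 F]
    [FiniteDimensional 𝕜 F] {f g : M →ₗ[𝕜] F} (h : ∀ x, ‖g x‖ = ‖f x‖) :
    ∃ Φ : F →ₗᵢ[𝕜] F, Φ.toLinearMap ∘ₗ f = g := by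
  have hker : ker f ≤ ker g := fun x hx => by
    rw [mem_ker, ← norm_eq_zero, h, norm_eq_zero, ← mem_ker]
    exact hx
  let φ : range f →ₗ[𝕜] F := (ker f).liftQ g hker ∘ₗ f.quotKerEquivRange.symm.toLinearMap
  have hφ : ∀ x, φ ⟨f x, mem_range_self f x⟩ = g x := fun x => by
    simp [φ, quotKerEquivRange_symm_apply_image]
  let ψ : range f →ₗᵢ[𝕜] F :=
    { toLinearMap := φ
      norm_map' := by
        rintro ⟨_, x, rfl⟩
        exact (congrArg norm (hφ x)).trans (h x) }
  exact ⟨ψ.extend, LinearMap.ext fun x => (ψ.extend_apply ⟨f x, mem_range_self f x⟩).trans (hφ x)⟩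

namespace Matrix

theorem conjTranspose_mul_add_conjTranspose_mul_eq_zero_iff {m n R : Type*} [Fintype m] [Ring R]
    [StarRing R] [IsAddTorsionFree R] (A B : Matrix m n R) :
    Aᴴ * B + Bᴴ * A = 0 ↔ (A - B)ᴴ * (A - B) = (A + B)ᴴ * (A + B) := by
  -- `Matrix` is a type synonym, so the `Pi` instance has to be transferred by hand.
  have : IsAddTorsionFree (Matrix n n R) := inferInstanceAs (IsAddTorsionFree (n → n → R))
  have key : (A + B)ᴴ * (A + B) - (A - B)ᴴ * (A - B) = 2 • (Aᴴ * B + Bᴴ * A) := by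
    simp only [conjTranspose_add, conjTranspose_sub, Matrix.add_mul, Matrix.sub_mul,
      Matrix.mul_add, Matrix.mul_sub, two_nsmul]
    abel
  rw [← (nsmul_right_injective two_ne_zero).eq_iff, nsmul_zero, ← key, sub_eq_zero, eq_comm]

variable {𝕜 m n : Type*} [RCLike 𝕜] [Fintype m] [DecidableEq m] [Fintype n] [DecidableEq n]

theorem inner_toEuclideanLin_self (Z : Matrix m n 𝕜) (v : EuclideanSpace 𝕜 n) :
    inner 𝕜 (toEuclideanLin Z v) (toEuclideanLin Z v) =
      inner 𝕜 v (toEuclideanLin (Zᴴ * Z) v) := by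
  rw [toLpLin_mul_same, toEuclideanLin_conjTranspose_eq_adjoint, LinearMap.comp_apply,
    LinearMap.adjoint_inner_right]

theorem norm_toEuclideanLin_eq_of_conjTranspose_mul_self_eq {X Y : Matrix m n 𝕜}
    (h : Xᴴ * X = Yᴴ * Y) (v : EuclideanSpace 𝕜 n) :
    ‖toEuclideanLin X v‖ = ‖toEuclideanLin Y v‖ := by
  rw [norm_eq_sqrt_re_inner (𝕜 := 𝕜), norm_eq_sqrt_re_inner (𝕜 := 𝕜), inner_toEuclideanLin_self,
    inner_toEuclideanLin_self, h]

theorem exists_mem_unitaryGroup_mul_eq_iff {X Y : Matrix m n 𝕜} :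
    (∃ U ∈ unitaryGroup m 𝕜, U * Y = X) ↔ Xᴴ * X = Yᴴ * Y := by
  constructor
  · rintro ⟨U, hU, rfl⟩
    rw [conjTranspose_mul, Matrix.mul_assoc, ← Matrix.mul_assoc Uᴴ, ← star_eq_conjTranspose,
      (mem_unitaryGroup_iff').mp hU, Matrix.one_mul]
  · intro h
    obtain ⟨Φ, hΦ⟩ := LinearMap.exists_linearIsometry_comp_eq_of_norm_eq
      (norm_toEuclideanLin_eq_of_conjTranspose_mul_self_eq h)
    refine ⟨toEuclideanLin.symm Φ.toLinearMap, ?_, toEuclideanLin.injective ?_⟩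
    · rw [mem_unitaryGroup_iff', star_eq_conjTranspose]
      apply toEuclideanLin.injective
      simp [toEuclideanLin_conjTranspose_eq_adjoint, LinearIsometry.adjoint_comp_self']
    · simpa using hΦ

end Matrix

namespace GPR

theorem skew_iff_exists_orthogonal_general
    (L : ℕ) (N R : Fin L → ℕ)
    (A B : V N R) :
    (∀ ℓ, (A ℓ)ᵀ * B ℓ + (B ℓ)ᵀ * A ℓ = 0) ↔
      (∃ Q : HGroup N, A - B = act Q (A + B)) := by
  have hℓ : ∀ ℓ, (A ℓ)ᵀ * B ℓ + (B ℓ)ᵀ * A ℓ = 0 ↔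
      ∃ Q : orthogonalGroup (Fin (N ℓ)) ℝ,
        A ℓ - B ℓ = (Q : Matrix (Fin (N ℓ)) (Fin (N ℓ)) ℝ) * (A ℓ + B ℓ) := fun ℓ => by
    simpa [eq_comm, conjTranspose_eq_transpose_of_trivial] using
      (conjTranspose_mul_add_conjTranspose_mul_eq_zero_iff (A ℓ) (B ℓ)).trans
        exists_mem_unitaryGroup_mul_eq_iff.symm
  simp only [hℓ, Classical.skolem, act, funext_iff, Pi.sub_apply, Pi.add_apply]

/-- For nonzero `A, B ∈ V`, the tuple `AᵀB` is skew-symmetric iff there is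
`Q ∈ H` with `A − B = Q·(A + B)`. -/
theorem skew_iff_exists_orthogonal
    (L : ℕ) (hL : 0 < L) (N R : Fin L → ℕ) (hN : ∀ ℓ, 0 < N ℓ) (hR : ∀ ℓ, 0 < R ℓ)
    (A B : V N R) (hA : A ≠ 0) (hB : B ≠ 0) :
    (∀ ℓ, (A ℓ)ᵀ * B ℓ + (B ℓ)ᵀ * A ℓ = 0) ↔
      (∃ Q : HGroup N, A - B = act Q (A + B)) :=
  skew_iff_exists_orthogonal_general L N R A B

end GPR
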